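/- arXiv:2312.17153 — 2 statements merged into one kernel-verified Lean document; each statement's English description precedes it below -/
import Mathlib

section
/- Explicit formula for classical Eulerian numbers: for n ≥ 1 and 0 ≤ k ≤ n-1, T^(1)_{n,k} = Σ 1^{t_1}·2^{t_2}···(k+1)^{t_{k+1}} · (t_1+1)(t_1+t_2+1)···(t_1+···+t_k+1), summed over nonnegative integers t_1,...,t_{k+1} with t_1+···+t_{k+1} = n-k-1. -/
/-!
Write `w t` for the summand attached to a tuple `t` and `F k n` for the sum of `w` over the
tuples of length `k + 1` with total `n`. Splitting off the last entry `a` of a tuple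
`t = s ++ [a]` gives `w t = (k + 2) ^ a * (|s| + 1) * w s`, hence
`F (k + 1) n = ∑_{a + b = n} (k + 2) ^ a (b + 1) F k b`.
Separating the term `a = 0` turns this into
`F (k + 1) (n + 1) = (k + 2) F (k + 1) n + (n + 2) F k (n + 1)`, which is the Eulerian recurrence
for `T_{k+n+1,k}`; both sides equal `1` when `k = 0` or `n = 0`.
-/

/-- The `m`th-order Eulerian numbers `T^(m)_{n,k}`, with integer descent index `k`
(so `T^(m)_{n,k} = 0` for `k < 0` or `k ≥ n`). -/
def eulerianT (m : ℕ) : ℕ → ℤ → ℤ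
  | 0, _ => 0
  | 1, k => if k = 0 then 1 else 0
  | n + 2, k =>
      if k < 0 ∨ (n : ℤ) + 2 ≤ k then 0
      else (k + 1) * eulerianT m (n + 1) k +
        ((m : ℤ) * ((n : ℤ) + 2) - k - (m : ℤ) + 1) * eulerianT m (n + 1) (k - 1)

open Finset

theorem Finset.Nat.sum_antidiagonalTuple_succ_eq_sum_snoc {M : Type*} [AddCommMonoid M]
    (k n : ℕ) (f : (Fin (k + 1) → ℕ) → M) :
    ∑ t ∈ Nat.antidiagonalTuple (k + 1) n, f t =
      ∑ p ∈ antidiagonal n, ∑ s ∈ Nat.antidiagonalTuple k p.2, f (Fin.snoc s p.1) := by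
  rw [sum_sigma']
  refine (sum_nbij' (fun x => Fin.snoc x.2 x.1.1)
    (fun t => ⟨(t (Fin.last k), ∑ i, Fin.init t i), Fin.init t⟩) ?_ ?_ ?_ ?_ ?_).symm
  · rintro ⟨⟨a, b⟩, s⟩ h
    simp only [mem_sigma, HasAntidiagonal.mem_antidiagonal, Nat.mem_antidiagonalTuple] at h ⊢
    rw [Fin.sum_univ_castSucc]
    simp [h.2, ← h.1, add_comm]
  · intro t ht
    simp only [mem_sigma, HasAntidiagonal.mem_antidiagonal, Nat.mem_antidiagonalTuple] at ht ⊢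
    rw [← ht, Fin.sum_univ_castSucc]
    simp [Fin.init, add_comm]
  · rintro ⟨⟨a, b⟩, s⟩ h
    simp only [mem_sigma, HasAntidiagonal.mem_antidiagonal, Nat.mem_antidiagonalTuple] at h
    simp [Fin.init_snoc, h.2]
  · intro t _
    simp
  · intro _ _
    rfl

def eulerianWeight (k : ℕ) (t : Fin (k + 1) → ℕ) : ℕ :=
  (∏ j : Fin (k + 1), ((j : ℕ) + 1) ^ t j) *
    ∏ j ∈ range k, ((∑ i ∈ univ.filter fun i : Fin (k + 1) => (i : ℕ) ≤ j, t i) + 1)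

theorem eulerianWeight_snoc (k : ℕ) (s : Fin (k + 1) → ℕ) (a : ℕ) :
    eulerianWeight (k + 1) (Fin.snoc s a) =
      (k + 2) ^ a * ((∑ i, s i) + 1) * eulerianWeight k s := by
  have partialSum_snoc : ∀ j ∈ range (k + 1),
      ∑ i ∈ univ.filter (fun i : Fin (k + 2) => (i : ℕ) ≤ j),
          (Fin.snoc s a : Fin (k + 2) → ℕ) i =
        ∑ i ∈ univ.filter (fun i : Fin (k + 1) => (i : ℕ) ≤ j), s i := by
    intro j hj
    rw [sum_filter, sum_filter, Fin.sum_univ_castSucc]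
    simp [(mem_range.mp hj).not_ge]
  have filter_last : univ.filter (fun i : Fin (k + 1) => (i : ℕ) ≤ k) = univ :=
    filter_true_of_mem fun i _ => Fin.is_le i
  rw [eulerianWeight, prod_congr rfl fun j hj => congrArg (· + 1) (partialSum_snoc j hj),
    Fin.prod_univ_castSucc, prod_range_succ, filter_last, eulerianWeight]
  simp only [Fin.snoc_castSucc, Fin.snoc_last, Fin.val_castSucc, Fin.val_last]
  ring

def eulerianSum (k n : ℕ) : ℕ :=
  ∑ t ∈ Nat.antidiagonalTuple (k + 1) n, eulerianWeight k t

theorem eulerianSum_zero_left (n : ℕ) : eulerianSum 0 n = 1 := by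
  simp [eulerianSum, eulerianWeight, Nat.antidiagonalTuple_one]

theorem eulerianSum_zero_right (k : ℕ) : eulerianSum k 0 = 1 := by
  simp [eulerianSum, eulerianWeight, Nat.antidiagonalTuple_zero_right]

theorem eulerianSum_succ_left (k n : ℕ) :
    eulerianSum (k + 1) n =
      ∑ p ∈ antidiagonal n, (k + 2) ^ p.1 * (p.2 + 1) * eulerianSum k p.2 := by
  rw [eulerianSum, Nat.sum_antidiagonalTuple_succ_eq_sum_snoc]
  refine sum_congr rfl fun p _ => ?_
  rw [eulerianSum, mul_sum]
  refine sum_congr rfl fun s hs => ?_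
  rw [eulerianWeight_snoc, Nat.mem_antidiagonalTuple.mp hs]

theorem eulerianSum_succ_succ (k n : ℕ) :
    eulerianSum (k + 1) (n + 1) =
      (k + 2) * eulerianSum (k + 1) n + (n + 2) * eulerianSum k (n + 1) := by
  rw [eulerianSum_succ_left, eulerianSum_succ_left, Nat.sum_antidiagonal_succ, mul_sum]
  simp only [pow_zero, pow_succ]
  rw [add_comm]
  congr 1
  · exact sum_congr rfl fun p _ => by ring
  · ring

theorem eulerianT_of_neg (m n : ℕ) {k : ℤ} (hk : k < 0) : eulerianT m n k = 0 := by
  rcases n with _ | _ | n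
  · rfl
  · rw [eulerianT, if_neg hk.ne]
  · rw [eulerianT, if_pos (.inl hk)]

theorem eulerianT_of_le (m n : ℕ) {k : ℤ} (hk : n ≤ k) : eulerianT m n k = 0 := by
  rcases n with _ | _ | n
  · rfl
  · rw [eulerianT, if_neg (by omega)]
  · rw [eulerianT, if_pos (.inr (by push_cast at hk; omega))]

theorem eulerianT_succ_succ (m n : ℕ) {k : ℤ} (h₀ : 0 ≤ k) (hk : k < n + 2) :
    eulerianT m (n + 2) k = (k + 1) * eulerianT m (n + 1) k +
      ((m : ℤ) * ((n : ℤ) + 2) - k - (m : ℤ) + 1) * eulerianT m (n + 1) (k - 1) := by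
  rw [eulerianT, if_neg (by omega)]

theorem eulerianT_zero_right (m n : ℕ) : eulerianT m (n + 1) 0 = 1 := by
  induction n with
  | zero => rfl
  | succ n ih =>
    rw [eulerianT_succ_succ m n le_rfl (by omega), ih, eulerianT_of_neg m _ (by norm_num)]
    ring

theorem eulerianT_one_self (k : ℕ) : eulerianT 1 (k + 1) k = 1 := by
  induction k with
  | zero => rfl
  | succ k ih =>
    rw [eulerianT_succ_succ 1 k (by omega) (by omega), eulerianT_of_le 1 (k + 1) le_rfl]
    push_cast
    rw [add_sub_cancel_right, ih]
    ring

theorem eulerianT_one_eq_eulerianSum (k n : ℕ) : eulerianT 1 (k + n + 1) k = eulerianSum k n := by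
  induction k generalizing n with
  | zero => rw [eulerianSum_zero_left, zero_add, Nat.cast_zero, eulerianT_zero_right]; rfl
  | succ k ihk =>
    induction n with
    | zero => rw [eulerianSum_zero_right, add_zero, eulerianT_one_self]; rfl
    | succ n ihn =>
      have hT := eulerianT_succ_succ 1 (k + n + 1) (k := k + 1) (by omega) (by omega)
      rw [show k + 1 + (n + 1) + 1 = k + n + 1 + 2 by ring, Nat.cast_succ, hT,
        add_sub_cancel_right, show k + n + 1 + 1 = k + (n + 1) + 1 by ring, ihk, ← Nat.cast_succ,
        show k + (n + 1) + 1 = k + 1 + n + 1 by ring, ihn, eulerianSum_succ_succ]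
      push_cast
      ring

theorem eulerianT1_explicit (n k : ℕ) (hn : 1 ≤ n) (hk : k ≤ n - 1) :
    eulerianT 1 n (k : ℤ) =
      ∑ t ∈ Finset.Nat.antidiagonalTuple (k + 1) (n - k - 1),
        ((∏ j : Fin (k + 1), ((j : ℕ) + 1) ^ t j : ℕ) : ℤ) *
          ∏ j ∈ Finset.range k,
            (((∑ i ∈ Finset.univ.filter fun i : Fin (k + 1) => (i : ℕ) ≤ j, t i) + 1 : ℕ) : ℤ) := by
  obtain ⟨m, rfl⟩ : ∃ m, n = k + m + 1 := ⟨n - k - 1, by omega⟩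
  rw [eulerianT_one_eq_eulerianSum, show k + m + 1 - k - 1 = m by omega, eulerianSum]
  push_cast [eulerianWeight]
  rfl
end

section
/- For m ≥ 2 and n ≥ 1, the row sum of the (m-1)-th order Eulerian triangle equals the last entry of the n-th row of the m-th order Eulerian triangle: Σ_{k=0}^{n-1} T^(m-1)_{n,k} = T^(m)_{n,n-1}. -/
/-!
Both sides are products. Summing the recurrence over `k`, the coefficients of `T^(m)_{n,k}`
add up to `(k + 1) + (m(n + 1) - k - m) = mn + 1`, so the row sums of order `m` satisfy
`S_{n+1} = (mn + 1) S_n`. On the last diagonal only the second term of the recurrence survives,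
so `T^(m)_{n+1,n} = ((m - 1)n + 1) T^(m)_{n,n-1}`. Hence both sides of the identity equal
`∏_{i=1}^{n-1} ((m - 1)i + 1)`.
-/

theorem eulerianT_eq_zero_of_le (m n : ℕ) {k : ℤ} (h : (n : ℤ) ≤ k) : eulerianT m n k = 0 := by
  match n with
  | 0 => rfl
  | 1 => simp [eulerianT, show k ≠ 0 by omega]
  | n + 2 => rw [eulerianT, if_pos (Or.inr (by push_cast at h; omega))]

theorem eulerianT_eq_zero_of_neg (m n : ℕ) {k : ℤ} (h : k < 0) : eulerianT m n k = 0 := by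
  match n with
  | 0 => rfl
  | 1 => simp [eulerianT, show k ≠ 0 by omega]
  | n + 2 => rw [eulerianT, if_pos (Or.inl h)]

/-- The recurrence holds for every `k`, also outside the triangle, where both sides vanish. -/
theorem eulerianT_add_two (m n : ℕ) (k : ℤ) :
    eulerianT m (n + 2) k = (k + 1) * eulerianT m (n + 1) k +
      ((m : ℤ) * ((n : ℤ) + 2) - k - (m : ℤ) + 1) * eulerianT m (n + 1) (k - 1) := by
  rw [eulerianT]
  split_ifs with h
  · rcases h with h | h
    · rw [eulerianT_eq_zero_of_neg m _ h, eulerianT_eq_zero_of_neg m _ (by omega : k - 1 < 0)]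
      ring
    · rw [eulerianT_eq_zero_of_le m (n + 1) (by push_cast; omega),
        eulerianT_eq_zero_of_le m (n + 1) (by push_cast; omega)]
      ring
  · rfl

theorem sum_eulerianT_add_one (m n : ℕ) :
    ∑ k ∈ Finset.range (n + 1), eulerianT m (n + 1) k = ∏ i ∈ Finset.range n, ((m : ℤ) * (i + 1) + 1) := by
  induction n with
  | zero => simp [eulerianT]
  | succ n ih =>
    have top : eulerianT m (n + 1) ((n + 1 : ℕ) : ℤ) = 0 := eulerianT_eq_zero_of_le m _ le_rfl
    have bottom : eulerianT m (n + 1) ((0 : ℕ) - 1 : ℤ) = 0 := eulerianT_eq_zero_of_neg m _ (by simp)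
    calc ∑ k ∈ Finset.range (n + 2), eulerianT m (n + 2) k
        = ∑ k ∈ Finset.range (n + 2), ((k : ℤ) + 1) * eulerianT m (n + 1) k +
            ∑ k ∈ Finset.range (n + 2),
              ((m : ℤ) * ((n : ℤ) + 2) - k - m + 1) * eulerianT m (n + 1) (k - 1) := by
          simp only [eulerianT_add_two, Finset.sum_add_distrib]
      _ = ∑ k ∈ Finset.range (n + 1), ((k : ℤ) + 1) * eulerianT m (n + 1) k +
            ∑ k ∈ Finset.range (n + 1),
              ((m : ℤ) * ((n : ℤ) + 2) - (k + 1 : ℕ) - m + 1) * eulerianT m (n + 1) k := by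
          rw [Finset.sum_range_succ _ (n + 1), top, Finset.sum_range_succ' _ (n + 1), bottom]
          simp
      _ = ((m : ℤ) * ((n : ℤ) + 1) + 1) * ∑ k ∈ Finset.range (n + 1), eulerianT m (n + 1) k := by
          rw [← Finset.sum_add_distrib, Finset.mul_sum]
          refine Finset.sum_congr rfl fun k _ => ?_
          push_cast
          ring
      _ = ∏ i ∈ Finset.range (n + 1), ((m : ℤ) * (i + 1) + 1) := by
          rw [ih, Finset.prod_range_succ, mul_comm]

theorem eulerianT_add_one_self (m n : ℕ) :
    eulerianT m (n + 1) n = ∏ i ∈ Finset.range n, (((m : ℤ) - 1) * (i + 1) + 1) := by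
  induction n with
  | zero => rfl
  | succ n ih =>
    rw [eulerianT_add_two, eulerianT_eq_zero_of_le m (n + 1) le_rfl, Nat.cast_succ,
      add_sub_cancel_right, ih, Finset.prod_range_succ]
    ring

theorem rowSum_eq_last_general (m n : ℕ) (hm : 2 ≤ m) :
    ∑ k ∈ Finset.range n, eulerianT (m - 1) n (k : ℤ) = eulerianT m n ((n : ℤ) - 1) := by
  cases n with
  | zero => rfl
  | succ n =>
    rw [sum_eulerianT_add_one, Nat.cast_succ, add_sub_cancel_right, eulerianT_add_one_self,
      Nat.cast_sub (by omega : 1 ≤ m), Nat.cast_one]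

theorem rowSum_eq_last (m n : ℕ) (hm : 2 ≤ m) (hn : 1 ≤ n) :
    ∑ k ∈ Finset.range n, eulerianT (m - 1) n (k : ℤ) = eulerianT m n ((n : ℤ) - 1) :=
  rowSum_eq_last_general m n hm
end
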